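/- Let T be a torus with an algebraic automorphism σ of finite order n, over an algebraically closed field of characteristic p ≥ 0. Then the component group T^σ / (T^σ)⁰ is isomorphic to the p'-part (prime-to-p part) of the finite abelian group Ker(1 + σ + ... + σ^{n-1} | X(T)) / (σ - 1)X(T). In particular its exponent divides n. -/

import Mathlib

/-!
The torus is modelled as `T = Hom(X, kˣ)`, with `σ` acting by precomposition and the identity
component of `T^σ` its maximal divisible subgroup.

Let `N = 1 + σ + ⋯ + σ^(n-1)`, `K = Ker N` and `I = (σ - 1) X`. Then `T^σ = Hom(X/I, kˣ)`,
`I ≤ K` and `n • K ≤ I`, so `K/I` is finite of exponent dividing `n`. Restricting characters to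
the `p'`-part `P` of `K/I ≤ X/I` gives a map `T^σ → Hom(P, kˣ)`, onto because `kˣ` is divisible,
hence an injective `ℤ`-module. A character killing `P` kills `K/I`, since `kˣ` has no
`p`-torsion; so it factors through the torsion-free group `X/K` and is divisible among such
characters. Conversely `Hom(P, kˣ)` is killed by `n`, so divisible elements restrict to zero.
Thus the kernel is the maximal divisible subgroup, and `T^σ/(T^σ)⁰ ≅ Hom(P, kˣ) ≅ P`, the last
because `P` is finite of order prime to `p`.
-/

abbrev TorusPts (X : Type*) [AddCommGroup X] (k : Type*) [Field k] :=
  X →+ Additive kˣ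

def precomp {X : Type*} [AddCommGroup X] (k : Type*) [Field k] (f : X →+ X) :
    TorusPts X k →+ TorusPts X k where
  toFun t := t.comp f
  map_zero' := by ext x; simp
  map_add' t s := by ext x; simp

def fixedSub {X : Type*} [AddCommGroup X] (k : Type*) [Field k] (σ : X →+ X) :
    AddSubgroup (TorusPts X k) :=
  AddMonoidHom.ker (precomp k σ - AddMonoidHom.id _)

def divPart (A : Type*) [AddCommGroup A] : AddSubgroup A :=
  ⨆ H ∈ {H : AddSubgroup A | ∀ m : ℕ, 0 < m → ∀ x ∈ H, ∃ y ∈ H, m • y = x}, H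

open QuotientAddGroup

noncomputable instance IsAlgClosed.divisibleByNatAdditiveUnits (k : Type*) [Field k]
    [IsAlgClosed k] : DivisibleBy (Additive kˣ) ℕ :=
  divisibleByOfSMulRightSurj _ _ fun {m} hm u => by
    obtain ⟨z, hz⟩ := IsAlgClosed.exists_pow_nat_eq ((u.toMul : kˣ) : k) (Nat.pos_of_ne_zero hm)
    have hz0 : z ≠ 0 := by
      rintro rfl
      exact (u.toMul).ne_zero (by rw [← hz, zero_pow hm])
    exact ⟨Additive.ofMul (Units.mk0 z hz0), Additive.toMul.injective (Units.ext (by simpa))⟩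

noncomputable instance IsAlgClosed.divisibleByIntAdditiveUnits (k : Type*) [Field k]
    [IsAlgClosed k] : DivisibleBy (Additive kˣ) ℤ :=
  AddGroup.divisibleByIntOfDivisibleByNat _

theorem Units.eq_zero_of_expChar_pow_nsmul_eq_zero {R : Type*} [CommRing R] [IsReduced R]
    (p : ℕ) [ExpChar R p] {a : ℕ} {u : Additive Rˣ} (h : p ^ a • u = 0) : u = 0 := by
  refine Additive.toMul.injective (Units.ext (iterateFrobenius_inj R p a ?_))
  simpa [iterateFrobenius_def] using congrArg (fun v : Additive Rˣ => ((v.toMul : Rˣ) : R)) h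

/-- `f` extends along the injection `m • · : F → F`, as `D` is injective. -/
theorem AddMonoidHom.exists_nsmul_eq_of_baer {F D : Type*} [AddCommGroup F] [IsAddTorsionFree F]
    [AddCommGroup D] (hD : Module.Baer ℤ D) (f : F →+ D) {m : ℕ} (hm : m ≠ 0) :
    ∃ g : F →+ D, m • g = f := by
  obtain ⟨g, hg⟩ := hD.extension_property_addMonoidHom (nsmulAddMonoidHom m)
    (IsAddTorsionFree.nsmul_right_injective hm) f
  refine ⟨g, AddMonoidHom.ext fun x => ?_⟩
  rw [← hg, AddMonoidHom.nsmul_apply, AddMonoidHom.comp_apply, nsmulAddMonoidHom_apply, map_nsmul]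

theorem divPart_le_ker_of_nsmul_eq_zero {A B : Type*} [AddCommGroup A] [AddCommGroup B]
    (f : A →+ B) {n : ℕ} (hn : n ≠ 0) (hB : ∀ b : B, n • b = 0) : divPart A ≤ f.ker :=
  iSup₂_le fun H hH t ht => by
    obtain ⟨s, -, rfl⟩ := hH n (Nat.pos_of_ne_zero hn) t ht
    rw [AddMonoidHom.mem_ker, map_nsmul, hB]

theorem le_divPart {A : Type*} [AddCommGroup A] {H : AddSubgroup A}
    (hH : ∀ m : ℕ, m ≠ 0 → ∀ x ∈ H, ∃ y ∈ H, m • y = x) : H ≤ divPart A :=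
  le_iSup₂ (f := fun H (_ : H ∈ _) => H) H fun m hm => hH m hm.ne'

section PrimeToCharPart

variable (k : Type*) [Ring k] [IsDomain k] (B : Type*) [AddCommGroup B]

/-- The `p'`-part of `B` for `p = ringChar k`; writing `p ∤ m` as `(m : k) ≠ 0` covers `p = 0`
and `p` prime at once. -/
def primeToCharPart : AddSubgroup B where
  carrier := {b | ∃ m : ℕ, (m : k) ≠ 0 ∧ m • b = 0}
  zero_mem' := ⟨1, by simp, smul_zero 1⟩
  add_mem' := by
    rintro a b ⟨m₁, hm₁, ha⟩ ⟨m₂, hm₂, hb⟩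
    refine ⟨m₁ * m₂, by push_cast; exact mul_ne_zero hm₁ hm₂, ?_⟩
    rw [smul_add, mul_comm, mul_smul, ha, mul_comm, mul_smul, hb, smul_zero, smul_zero, add_zero]
  neg_mem' := by
    rintro a ⟨m, hm, ha⟩
    exact ⟨m, hm, by rw [smul_neg, ha, neg_zero]⟩

theorem coe_primeToCharPart :
    (primeToCharPart k B : Set B) = {b | ∃ m : ℕ, 0 < m ∧ ¬ ringChar k ∣ m ∧ m • b = 0} := by
  ext b
  simp only [SetLike.mem_coe, ← ringChar.spec]
  constructor
  · rintro ⟨m, hm, hb⟩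
    exact ⟨m, Nat.pos_of_ne_zero (by rintro rfl; exact hm Nat.cast_zero), hm, hb⟩
  · rintro ⟨m, -, hm, hb⟩
    exact ⟨m, hm, hb⟩

variable {k B}

theorem mem_primeToCharPart_primeToCharPart (b : primeToCharPart k B) :
    b ∈ primeToCharPart k (primeToCharPart k B) := by
  obtain ⟨m, hm, hb⟩ := b.2
  exact ⟨m, hm, Subtype.ext hb⟩

end PrimeToCharPart

/-- Write `n = p ^ a * n'` with `p ∤ n'`; Bezout for `p ^ a` and `n'` splits `x` into `p ^ a • x`,
killed by `n'`, and `n' • x`, killed by `p ^ a` and hence sent to zero by `χ`. -/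
theorem AddMonoidHom.eq_zero_of_forall_coprime_torsion {Q D : Type*} [AddCommGroup Q]
    [AddCommGroup D] {p : ℕ} (hp : p.Prime) {n : ℕ} (hn : n ≠ 0) (hQ : ∀ x : Q, n • x = 0)
    (hD : ∀ (a : ℕ) (d : D), p ^ a • d = 0 → d = 0) (χ : Q →+ D)
    (hχ : ∀ (m : ℕ) (x : Q), ¬ p ∣ m → m • x = 0 → χ x = 0) : χ = 0 := by
  obtain ⟨a, n', hn', rfl⟩ := Nat.exists_eq_pow_mul_and_not_dvd hn p hp.ne_one
  obtain ⟨c, d, hcd⟩ : IsCoprime ((p ^ a : ℕ) : ℤ) (n' : ℤ) :=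
    Nat.isCoprime_iff_coprime.mpr (((hp.coprime_iff_not_dvd).mpr hn').pow_left a)
  ext x
  have h₁ : χ (p ^ a • x) = 0 := hχ n' _ hn' (by rw [smul_smul, mul_comm, hQ])
  have h₂ : χ (n' • x) = 0 := hD a _ (by rw [← map_nsmul, smul_smul, hQ, map_zero])
  calc χ x = χ ((c * ((p ^ a : ℕ) : ℤ) + d * (n' : ℤ)) • x) := by rw [hcd, one_zsmul]
    _ = c • χ (p ^ a • x) + d • χ (n' • x) := by
      rw [add_zsmul, mul_zsmul, mul_zsmul, natCast_zsmul, natCast_zsmul, map_add, map_zsmul,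
        map_zsmul]
    _ = 0 := by rw [h₁, h₂, smul_zero, smul_zero, add_zero]

theorem eq_zero_of_primeToCharPart_le_ker {k Q : Type*} [Field k] [AddCommGroup Q] {n : ℕ}
    (hn : n ≠ 0) (hQ : ∀ x : Q, n • x = 0) (χ : Q →+ Additive kˣ)
    (hχ : primeToCharPart k Q ≤ χ.ker) : χ = 0 := by
  rcases CharP.char_is_prime_or_zero k (ringChar k) with hp | hp
  · have := ExpChar.prime (R := k) hp
    refine χ.eq_zero_of_forall_coprime_torsion hp hn hQ
      (fun a d => Units.eq_zero_of_expChar_pow_nsmul_eq_zero (ringChar k))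
      fun m x hm hx => hχ ⟨m, by rwa [Ne, ringChar.spec], hx⟩
  · exact AddMonoidHom.ext fun x => hχ ⟨n, by rwa [Ne, ringChar.spec, hp, zero_dvd_iff], hQ x⟩

namespace AddAut

variable {X : Type*} [AddCommGroup X] (σ : AddAut X) (n : ℕ)

/-- The norm `1 + σ + ⋯ + σ^(n-1)`: in `AddAut X`, `+` is composition, so `i • σ` is `σ^i`. -/
abbrev normHom : X →+ X := ∑ i ∈ Finset.range n, ((i • σ : AddAut X) : X →+ X)

abbrev subOneRange : AddSubgroup X := (((σ : AddAut X) : X →+ X) - AddMonoidHom.id X).range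

abbrev kerNormQuot : Type _ := (σ.normHom n).ker ⧸ σ.subOneRange.addSubgroupOf (σ.normHom n).ker

theorem normHom_apply (x : X) : σ.normHom n x = ∑ i ∈ Finset.range n, (i • σ) x :=
  AddMonoidHom.finsetSum_apply _ _ _

theorem normHom_apply_sub (x : X) : σ.normHom n (σ x - x) = (n • σ) x - x := by
  have hstep (i : ℕ) : (i • σ) (σ x - x) = ((i + 1) • σ) x - (i • σ) x := by
    rw [map_sub, succ_nsmul]
    rfl
  simp only [normHom_apply, hstep, Finset.sum_range_sub (fun i => (i • σ) x)]
  rfl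

theorem subOneRange_le_ker_normHom (hσ : n • σ = 0) : σ.subOneRange ≤ (σ.normHom n).ker := by
  rintro _ ⟨x, rfl⟩
  have hx := σ.normHom_apply_sub n x
  rw [hσ] at hx
  exact hx.trans (sub_self x)

theorem nsmul_apply_sub_mem_subOneRange (i : ℕ) (x : X) : (i • σ) x - x ∈ σ.subOneRange := by
  induction i with
  | zero => exact (sub_self x).symm ▸ zero_mem _
  | succ i ih =>
    rw [← sub_add_sub_cancel _ ((i • σ) x)]
    exact add_mem ⟨(i • σ) x, by rw [succ_nsmul']; rfl⟩ ih

theorem nsmul_sub_normHom_mem_subOneRange (x : X) : n • x - σ.normHom n x ∈ σ.subOneRange := by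
  have hx : n • x = ∑ _i ∈ Finset.range n, x := by rw [Finset.sum_const, Finset.card_range]
  rw [normHom_apply, hx, ← Finset.sum_sub_distrib]
  exact sum_mem fun i _ => neg_sub ((i • σ) x) x ▸ neg_mem (σ.nsmul_apply_sub_mem_subOneRange i x)

theorem nsmul_kerNormQuot_eq_zero (q : σ.kerNormQuot n) : n • q = 0 := by
  induction q using QuotientAddGroup.induction_on with | H x => ?_
  rw [← QuotientAddGroup.mk_nsmul, QuotientAddGroup.eq_zero_iff, AddSubgroup.mem_addSubgroupOf]
  have hx := σ.nsmul_sub_normHom_mem_subOneRange n x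
  rwa [show σ.normHom n x = 0 from x.2, sub_zero] at hx

theorem finite_kerNormQuot [Module.Finite ℤ X] (hn : n ≠ 0) : Finite (σ.kerNormQuot n) := by
  have : Module.Finite ℤ (σ.normHom n).ker :=
    Module.Finite.of_injective (σ.normHom n).ker.subtype.toIntLinearMap Subtype.val_injective
  have : Module.Finite ℤ (σ.kerNormQuot n) :=
    Module.Finite.of_surjective (QuotientAddGroup.mk' _).toIntLinearMap
      (QuotientAddGroup.mk'_surjective _)
  refine Module.finite_of_fg_torsion _ fun q => ⟨⟨n, ?_⟩, ?_⟩
  · exact mem_nonZeroDivisors_of_ne_zero (Int.natCast_ne_zero.mpr hn)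
  · simpa [Submonoid.smul_def] using σ.nsmul_kerNormQuot_eq_zero n q

end AddAut

theorem AddMonoidHom.isAddTorsionFree_quotient_ker {G H : Type*} [AddGroup G] [AddGroup H]
    [IsAddTorsionFree H] (f : G →+ H) : IsAddTorsionFree (G ⧸ f.ker) :=
  Function.Injective.isAddTorsionFree (f.range.subtype.comp (quotientKerEquivRange f))
    (Subtype.val_injective.comp (quotientKerEquivRange f).injective)

theorem AddMonoidHom.exists_nsmul_eq_of_ker_le {X D : Type*} [AddCommGroup X] [AddCommGroup D]
    {K : AddSubgroup X} [IsAddTorsionFree (X ⧸ K)] (hD : Module.Baer ℤ D) (t : X →+ D)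
    (ht : K ≤ t.ker) {m : ℕ} (hm : m ≠ 0) : ∃ s : X →+ D, K ≤ s.ker ∧ m • s = t := by
  obtain ⟨g, hg⟩ := (lift K t ht).exists_nsmul_eq_of_baer hD hm
  refine ⟨g.comp (QuotientAddGroup.mk' K), fun x hx => by simp [(eq_zero_iff x).mpr hx],
    AddMonoidHom.ext fun x => ?_⟩
  exact DFunLike.congr_fun hg (x : X ⧸ K)

theorem QuotientAddGroup.map_addSubgroupOf_subtype_injective {G : Type*} [AddGroup G]
    (H K : AddSubgroup G) [H.Normal] :
    Function.Injective (map (H.addSubgroupOf K) H K.subtype fun _ hx => hx) := by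
  rw [injective_iff_map_eq_zero]
  intro q hq
  induction q using QuotientAddGroup.induction_on with | H x => ?_
  change ((x : G) : G ⧸ H) = 0 at hq
  rw [eq_zero_iff] at hq
  rwa [eq_zero_iff, AddSubgroup.mem_addSubgroupOf]

theorem nonempty_addMonoidHom_addEquiv_of_forall_mem_primeToCharPart {k B : Type*} [Field k]
    [IsAlgClosed k] [AddCommGroup B] [Finite B] (hB : ∀ b : B, b ∈ primeToCharPart k B) :
    Nonempty ((B →+ Additive kˣ) ≃+ B) := by
  obtain ⟨g, hg⟩ :=
    AddMonoid.exists_addOrderOf_eq_exponent (AddMonoid.ExponentExists.of_finite (G := B))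
  obtain ⟨m, hm, hgm⟩ := hB g
  have : NeZero (Monoid.exponent (Multiplicative B) : k) := by
    refine ⟨fun h => hm ?_⟩
    obtain ⟨c, rfl⟩ := hg ▸ addOrderOf_dvd_of_nsmul_eq_zero hgm
    rw [Monoid.exponent_multiplicative] at h
    rw [Nat.cast_mul, h, zero_mul]
  obtain ⟨e⟩ := CommGroup.monoidHom_mulEquiv_of_hasEnoughRootsOfUnity (Multiplicative B) k
  exact ⟨AddMonoidHom.toMultiplicativeLeftAddEquiv.trans (MulEquiv.toAdditiveLeft e)⟩

section FixedCharacters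

variable {k : Type*} [Field k] {X : Type*} [AddCommGroup X]

theorem mem_fixedSub_iff {g : X →+ X} {t : TorusPts X k} :
    t ∈ fixedSub k g ↔ ∀ x, t (g x) = t x := by
  simp [fixedSub, DFunLike.ext_iff, precomp, sub_eq_zero]

theorem mem_fixedSub_iff_subOneRange_le_ker {σ : AddAut X} {t : TorusPts X k} :
    t ∈ fixedSub k (σ : X →+ X) ↔ σ.subOneRange ≤ t.ker := by
  rw [mem_fixedSub_iff]
  constructor
  · rintro h _ ⟨x, rfl⟩
    exact (map_sub t _ _).trans (sub_eq_zero.mpr (h x))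
  · intro h x
    exact sub_eq_zero.mp ((map_sub t _ _).symm.trans (h ⟨x, rfl⟩))

variable (σ : AddAut X) (n : ℕ)

variable (k) in
def restrictToKerNormQuot :
    fixedSub k (σ : X →+ X) →+ (σ.kerNormQuot n →+ Additive kˣ) where
  toFun t := lift _ ((t : TorusPts X k).comp (σ.normHom n).ker.subtype) fun x hx =>
    mem_fixedSub_iff_subOneRange_le_ker.mp t.2 (AddSubgroup.mem_addSubgroupOf.mp hx)
  map_zero' := by ext; rfl
  map_add' _ _ := by ext; rfl

theorem restrictToKerNormQuot_eq_zero_iff (t : fixedSub k (σ : X →+ X)) :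
    restrictToKerNormQuot k σ n t = 0 ↔ (σ.normHom n).ker ≤ (t : TorusPts X k).ker :=
  ⟨fun h x hx => DFunLike.congr_fun h ((⟨x, hx⟩ : (σ.normHom n).ker) : σ.kerNormQuot n),
    fun h => addMonoidHom_ext _ (AddMonoidHom.ext fun x => h x.2)⟩

variable (k) in
def restrictToPrimePart :
    fixedSub k (σ : X →+ X) →+ (primeToCharPart k (σ.kerNormQuot n) →+ Additive kˣ) :=
  (AddMonoidHom.compHom' (primeToCharPart k _).subtype).comp (restrictToKerNormQuot k σ n)

variable {σ n}

theorem restrictToPrimePart_eq_zero_iff (hn : n ≠ 0) (t : fixedSub k (σ : X →+ X)) :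
    restrictToPrimePart k σ n t = 0 ↔ (σ.normHom n).ker ≤ (t : TorusPts X k).ker := by
  rw [← restrictToKerNormQuot_eq_zero_iff]
  refine ⟨fun h => ?_, fun h => by simp [restrictToPrimePart, h]⟩
  exact eq_zero_of_primeToCharPart_le_ker hn (σ.nsmul_kerNormQuot_eq_zero n) _
    fun q hq => AddMonoidHom.mem_ker.mpr (DFunLike.congr_fun h ⟨q, hq⟩)

theorem restrictToPrimePart_surjective [IsAlgClosed k] :
    Function.Surjective (restrictToPrimePart k σ n) := by
  intro χ
  obtain ⟨h, hh⟩ := (Module.Baer.of_divisible (Additive kˣ)).extension_property_addMonoidHom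
    ((map _ σ.subOneRange (σ.normHom n).ker.subtype fun _ hx => hx).comp
      (primeToCharPart k _).subtype)
    ((map_addSubgroupOf_subtype_injective _ _).comp Subtype.val_injective) χ
  refine ⟨⟨h.comp (mk' σ.subOneRange),
    mem_fixedSub_iff_subOneRange_le_ker.mpr fun x hx => by simp [(eq_zero_iff x).mpr hx]⟩, ?_⟩
  rw [← hh]
  ext ⟨q, hq⟩
  induction q using QuotientAddGroup.induction_on
  rfl

theorem ker_restrictToPrimePart [IsAlgClosed k] [IsAddTorsionFree X] (hn : n ≠ 0)
    (hσ : n • σ = 0) : (restrictToPrimePart k σ n).ker = divPart (fixedSub k (σ : X →+ X)) := by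
  refine le_antisymm (le_divPart fun m hm t ht => ?_)
    (divPart_le_ker_of_nsmul_eq_zero _ hn fun χ => ?_)
  · rw [AddMonoidHom.mem_ker, restrictToPrimePart_eq_zero_iff hn] at ht
    have := (σ.normHom n).isAddTorsionFree_quotient_ker
    obtain ⟨s, hsK, hst⟩ := (t : TorusPts X k).exists_nsmul_eq_of_ker_le
      (Module.Baer.of_divisible _) ht hm
    have hs : s ∈ fixedSub k (σ : X →+ X) := mem_fixedSub_iff_subOneRange_le_ker.mpr
      ((σ.subOneRange_le_ker_normHom n hσ).trans hsK)
    exact ⟨⟨s, hs⟩, (restrictToPrimePart_eq_zero_iff hn _).mpr hsK, Subtype.ext hst⟩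
  · ext q
    rw [AddMonoidHom.nsmul_apply, ← map_nsmul,
      show n • q = 0 from Subtype.ext (σ.nsmul_kerNormQuot_eq_zero n q), map_zero]
    rfl

end FixedCharacters

/-- Let `T` be a torus over an algebraically closed field of
characteristic `p ≥ 0` with an automorphism `σ` of finite order `n`.  Then the
component group `T^σ / (T^σ)⁰` is isomorphic to the `p'`-part of the finite abelian
group `Ker(1 + σ + ⋯ + σ^{n-1} | X(T)) / (σ - 1) X(T)`; in particular, its exponent
divides `n`. -/
theorem component_group_fixed_iso_pprime_part
    {k : Type*} [Field k] [IsAlgClosed k]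
    {X : Type*} [AddCommGroup X] [Module.Free ℤ X] [Module.Finite ℤ X]
    (σ : AddAut X) (n : ℕ) (hn : 0 < n) (hord : addOrderOf σ = n) :
    (∃ φ : (↥(fixedSub k ((σ : AddAut X) : X →+ X)) ⧸
          (AddSubgroup.map (fixedSub k ((σ : AddAut X) : X →+ X)).subtype
              (divPart (fixedSub k ((σ : AddAut X) : X →+ X)))).addSubgroupOf
            (fixedSub k ((σ : AddAut X) : X →+ X))) →+
        (↥(AddMonoidHom.ker (∑ i ∈ Finset.range n, ((i • σ : AddAut X) : X →+ X))) ⧸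
          (AddMonoidHom.range (((σ : AddAut X) : X →+ X) - AddMonoidHom.id X)).addSubgroupOf
            (AddMonoidHom.ker (∑ i ∈ Finset.range n, ((i • σ : AddAut X) : X →+ X)))),
        Function.Injective φ ∧
        Set.range φ = {q | ∃ m : ℕ, 0 < m ∧ ¬ (ringChar k ∣ m) ∧ m • q = 0}) ∧
    (∀ x : (↥(fixedSub k ((σ : AddAut X) : X →+ X)) ⧸
          (AddSubgroup.map (fixedSub k ((σ : AddAut X) : X →+ X)).subtype
              (divPart (fixedSub k ((σ : AddAut X) : X →+ X)))).addSubgroupOf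
            (fixedSub k ((σ : AddAut X) : X →+ X))),
        n • x = 0) := by
  have hσ : n • σ = 0 := hord ▸ addOrderOf_nsmul_eq_zero σ
  have : IsAddTorsionFree X := Module.isTorsionFree_int_iff_isAddTorsionFree.mp inferInstance
  have hdiv : (AddSubgroup.map (fixedSub k (σ : X →+ X)).subtype
      (divPart (fixedSub k (σ : X →+ X)))).addSubgroupOf (fixedSub k (σ : X →+ X)) =
      (restrictToPrimePart k σ n).ker := by
    rw [ker_restrictToPrimePart hn.ne' hσ]
    exact AddSubgroup.comap_map_eq_self_of_injective Subtype.val_injective _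
  have := σ.finite_kerNormQuot n hn.ne'
  obtain ⟨e⟩ := nonempty_addMonoidHom_addEquiv_of_forall_mem_primeToCharPart (k := k)
    (mem_primeToCharPart_primeToCharPart (B := σ.kerNormQuot n))
  let E := ((quotientAddEquivOfEq hdiv).trans
    (quotientKerEquivOfSurjective _ restrictToPrimePart_surjective)).trans e
  have hφ : Function.Injective ((primeToCharPart k _).subtype.comp E.toAddMonoidHom) :=
    Subtype.val_injective.comp E.injective
  refine ⟨⟨_, hφ, ?_⟩, fun x => hφ ?_⟩
  · rw [← coe_primeToCharPart, AddMonoidHom.coe_comp, Set.range_comp, AddEquiv.coe_toAddMonoidHom,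
      E.surjective.range_eq, Set.image_univ, AddSubgroup.coe_subtype, Subtype.range_coe]
  · rw [map_nsmul, map_zero]
    exact σ.nsmul_kerNormQuot_eq_zero n _
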